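/- Let F and G be formal group laws and f, g endomorphisms of F and G respectively, with g stable (g'(0) neither 0 nor a root of unity). If h(X) ∈ X·O_K⟦X⟧ satisfies h'(0) ≠ 0 and h ∘ f = g ∘ h, then h is a homomorphism from F to G, i.e. h(F(X,Y)) = G(h(X),h(Y)). -/

import Mathlib

open MvPowerSeries

/-- Substitution of `k` power series (each with zero constant term) into a
power series in `k` variables: the coefficient of a monomial `m` in
`f(g 0, ..., g (k-1))`. The sum is finite since each `g i` has zero constant term,
so only exponents `e` of total degree at most the degree of `m` contribute. -/
noncomputable def msubst {R : Type*} [CommRing R] {k l : ℕ}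
    (f : MvPowerSeries (Fin k) R) (g : Fin k → MvPowerSeries (Fin l) R) :
    MvPowerSeries (Fin l) R :=
  fun m => ∑ e ∈ Finset.Iic (Finsupp.equivFunOnFinite.symm
      (fun _ : Fin k => m.sum fun _ n => n)),
    (MvPowerSeries.coeff e f) * MvPowerSeries.coeff m (∏ i, g i ^ e i)

/-- One-variable power series, as multivariate power series in one variable. -/
abbrev PS (R : Type*) [CommRing R] := MvPowerSeries (Fin 1) R

/-- Composition `f ∘ g` of one-variable power series (`g` with zero constant term). -/
noncomputable def comp {R : Type*} [CommRing R] (f g : PS R) : PS R := msubst f ![g]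

/-- The derivative at `0` of a one-variable power series, i.e. its linear coefficient. -/
noncomputable def d0 {R : Type*} [CommRing R] (f : PS R) : R :=
  MvPowerSeries.coeff (Finsupp.single 0 1) f

/-- The partial derivative at `0` in the `i`-th variable, i.e. the linear coefficient. -/
noncomputable def pd0 {R : Type*} [CommRing R] {d : ℕ} (h : MvPowerSeries (Fin d) R)
    (i : Fin d) : R := MvPowerSeries.coeff (Finsupp.single i 1) h

/-- A one-variable power series `u ∈ X·R⟦X⟧` is stable if `u'(0)` is neither `0`
nor a root of unity. -/
def Stable {R : Type*} [CommRing R] (u : PS R) : Prop :=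
  constantCoeff u = 0 ∧ d0 u ≠ 0 ∧ ∀ n : ℕ, 0 < n → (d0 u) ^ n ≠ 1

/-- `h ∘ (u, ..., u)` : substitution of the one-variable series `u` in each of
the `d` variables of `h`. -/
noncomputable def compEach {R : Type*} [CommRing R] {d : ℕ}
    (h : MvPowerSeries (Fin d) R) (u : PS R) : MvPowerSeries (Fin d) R :=
  msubst h (fun i => msubst u ![MvPowerSeries.X i])

/-- `u ∘ h` : substitution of `h` into the one-variable series `u`. -/
noncomputable def substIn {R : Type*} [CommRing R] {d : ℕ}
    (u : PS R) (h : MvPowerSeries (Fin d) R) : MvPowerSeries (Fin d) R :=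
  msubst u ![h]

/-- A formal group law over `R`: `F(X,0) = X`, `F(0,Y) = Y` and
`F(F(X,Y),Z) = F(X,F(Y,Z))`. -/
structure IsFGL {R : Type*} [CommRing R] (F : MvPowerSeries (Fin 2) R) : Prop where
  left : ∀ n : ℕ, MvPowerSeries.coeff (Finsupp.single 0 n) F = if n = 1 then 1 else 0
  right : ∀ n : ℕ, MvPowerSeries.coeff (Finsupp.single 1 n) F = if n = 1 then 1 else 0
  assoc : msubst F ![msubst F ![(X 0 : MvPowerSeries (Fin 3) R), X 1], X 2]
      = msubst F ![(X 0 : MvPowerSeries (Fin 3) R),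
          msubst F ![(X 1 : MvPowerSeries (Fin 3) R), X 2]]

/-- `h` is a homomorphism of formal group laws from `F` to `G`:
`h(0) = 0` and `h(F(X,Y)) = G(h(X),h(Y))`. -/
def IsHomFGL {R : Type*} [CommRing R] (F G : MvPowerSeries (Fin 2) R) (h : PS R) : Prop :=
  constantCoeff h = 0 ∧
    msubst h ![F] = msubst G ![msubst h ![(X 0 : MvPowerSeries (Fin 2) R)],
      msubst h ![(X 1 : MvPowerSeries (Fin 2) R)]]

/-- `h` is an endomorphism of the formal group law `F`. -/
def IsEndoFGL {R : Type*} [CommRing R] (F : MvPowerSeries (Fin 2) R) (h : PS R) : Prop :=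
  IsHomFGL F F h

section Dev
variable {R : Type*} [CommRing R] {k l d : ℕ}

/-- order ≥ t -/
def OrdGE (t : ℕ) (φ : MvPowerSeries (Fin l) R) : Prop :=
  ∀ m : Fin l →₀ ℕ, m.degree < t → coeff m φ = 0

lemma degree_add (m e : Fin l →₀ ℕ) : (m + e).degree = m.degree + e.degree := by
  simp [Finsupp.degree_eq_weight_one, map_add]

lemma degree_sum_univ (m : Fin l →₀ ℕ) : m.degree = ∑ i, m i := by
  rw [Finsupp.degree_apply]
  exact Finset.sum_subset (Finset.subset_univ _) (by simp [Finsupp.notMem_support_iff])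

lemma ordGE_mono {s t : ℕ} (h : s ≤ t) {φ : MvPowerSeries (Fin l) R} (hφ : OrdGE t φ) :
    OrdGE s φ := fun m hm => hφ m (lt_of_lt_of_le hm h)

lemma ordGE_zero (φ : MvPowerSeries (Fin l) R) : OrdGE 0 φ := fun _ hm => absurd hm (by omega)

lemma ordGE_of_constantCoeff_zero {φ : MvPowerSeries (Fin l) R}
    (h : constantCoeff φ = 0) : OrdGE 1 φ := by
  intro m hm
  have : m.degree = 0 := by omega
  rw [(Finsupp.degree_eq_zero_iff m).mp this]
  exact h

lemma OrdGE.add {s : ℕ} {φ ψ : MvPowerSeries (Fin l) R} (hφ : OrdGE s φ) (hψ : OrdGE s ψ) :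
    OrdGE s (φ + ψ) := by
  intro m hm; rw [map_add, hφ m hm, hψ m hm, add_zero]

lemma OrdGE.sub {s : ℕ} {φ ψ : MvPowerSeries (Fin l) R} (hφ : OrdGE s φ) (hψ : OrdGE s ψ) :
    OrdGE s (φ - ψ) := by
  intro m hm; rw [map_sub, hφ m hm, hψ m hm, sub_zero]

lemma OrdGE.mul {s t : ℕ} {φ ψ : MvPowerSeries (Fin l) R} (hφ : OrdGE s φ) (hψ : OrdGE t ψ) :
    OrdGE (s + t) (φ * ψ) := by
  intro m hm
  rw [coeff_mul]
  apply Finset.sum_eq_zero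
  intro p hp
  rw [Finset.HasAntidiagonal.mem_antidiagonal] at hp
  have hd : p.1.degree + p.2.degree = m.degree := by rw [← degree_add, hp]
  rcases lt_or_ge p.1.degree s with h1 | h1
  · rw [hφ p.1 h1, zero_mul]
  · rw [hψ p.2 (by omega), mul_zero]

lemma ordGE_prod {ι : Type*} [DecidableEq ι] (s : Finset ι) (t : ι → ℕ) (φ : ι → MvPowerSeries (Fin l) R)
    (h : ∀ i ∈ s, OrdGE (t i) (φ i)) : OrdGE (∑ i ∈ s, t i) (∏ i ∈ s, φ i) := by
  induction s using Finset.induction with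
  | empty => simpa using ordGE_zero _
  | @insert a s ha ih =>
    rw [Finset.prod_insert ha, Finset.sum_insert ha]
    exact (h a (Finset.mem_insert_self a s)).mul
      (ih fun i hi => h i (Finset.mem_insert_of_mem hi))

lemma OrdGE.pow {s : ℕ} {φ : MvPowerSeries (Fin l) R} (hφ : OrdGE s φ) (n : ℕ) :
    OrdGE (n * s) (φ ^ n) := by
  have := ordGE_prod (Finset.range n) (fun _ => s) (fun _ => φ) (fun _ _ => hφ)
  simpa [Finset.prod_const, Finset.sum_const, Finset.card_range] using this

/-- Product difference lemma. -/
lemma ordGE_prod_sub_prod {ι : Type*} [DecidableEq ι] (s : Finset ι) (t : ι → ℕ) (r : ℕ)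
    (φ ψ : ι → MvPowerSeries (Fin l) R)
    (hφ : ∀ i ∈ s, OrdGE (t i) (φ i)) (hψ : ∀ i ∈ s, OrdGE (t i) (ψ i))
    (hd : ∀ i ∈ s, OrdGE (t i + r) (φ i - ψ i)) :
    OrdGE (∑ i ∈ s, t i + r) (∏ i ∈ s, φ i - ∏ i ∈ s, ψ i) := by
  induction s using Finset.induction with
  | empty => intro m hm; simp
  | @insert a s ha ih =>
    rw [Finset.prod_insert ha, Finset.prod_insert ha, Finset.sum_insert ha]
    have key : φ a * ∏ i ∈ s, φ i - ψ a * ∏ i ∈ s, ψ i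
        = φ a * (∏ i ∈ s, φ i - ∏ i ∈ s, ψ i) + (φ a - ψ a) * ∏ i ∈ s, ψ i := by ring
    rw [key]
    have h1 : OrdGE (t a + (∑ i ∈ s, t i + r)) (φ a * (∏ i ∈ s, φ i - ∏ i ∈ s, ψ i)) :=
      (hφ a (Finset.mem_insert_self a s)).mul
        (ih (fun i hi => hφ i (Finset.mem_insert_of_mem hi))
          (fun i hi => hψ i (Finset.mem_insert_of_mem hi))
          (fun i hi => hd i (Finset.mem_insert_of_mem hi)))
    have h2 : OrdGE ((t a + r) + ∑ i ∈ s, t i) ((φ a - ψ a) * ∏ i ∈ s, ψ i) :=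
      (hd a (Finset.mem_insert_self a s)).mul
        (ordGE_prod s t ψ (fun i hi => hψ i (Finset.mem_insert_of_mem hi)))
    exact (ordGE_mono (t := t a + (∑ i ∈ s, t i + r)) (by omega) h1).add
      (ordGE_mono (t := t a + r + ∑ i ∈ s, t i) (by omega) h2)

end Dev
section Dev2
variable {R : Type*} [CommRing R] {k l : ℕ}

lemma mem_Iic_const {e : Fin k →₀ ℕ} {N : ℕ} :
    e ∈ Finset.Iic (Finsupp.equivFunOnFinite.symm (fun _ : Fin k => N)) ↔ ∀ i, e i ≤ N := by
  rw [Finset.mem_Iic]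
  constructor
  · intro h i; exact h i
  · intro h i; exact h i

lemma ordGE_prod_pow {g : Fin k → MvPowerSeries (Fin l) R}
    (hg : ∀ i, constantCoeff (g i) = 0) (e : Fin k →₀ ℕ) :
    OrdGE e.degree (∏ i, g i ^ e i) := by
  rw [degree_sum_univ]
  exact ordGE_prod Finset.univ (fun i => e i) _
    (fun i _ => by simpa using (ordGE_of_constantCoeff_zero (hg i)).pow (e i))

/-- Stability: the defining sum of `msubst` can be extended to any bound `N ≥ deg m`. -/
lemma coeff_msubst (f : MvPowerSeries (Fin k) R) {g : Fin k → MvPowerSeries (Fin l) R}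
    (hg : ∀ i, constantCoeff (g i) = 0) (m : Fin l →₀ ℕ) {N : ℕ} (hN : m.degree ≤ N) :
    coeff m (msubst f g) = ∑ e ∈ Finset.Iic (Finsupp.equivFunOnFinite.symm
      (fun _ : Fin k => N)), coeff e f * coeff m (∏ i, g i ^ e i) := by
  have hdef : coeff m (msubst f g) = ∑ e ∈ Finset.Iic (Finsupp.equivFunOnFinite.symm
      (fun _ : Fin k => m.degree)), coeff e f * coeff m (∏ i, g i ^ e i) := rfl
  rw [hdef]
  apply Finset.sum_subset
  · intro e he
    rw [mem_Iic_const] at he ⊢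
    exact fun i => le_trans (he i) hN
  · intro e _ hne
    rw [mem_Iic_const] at hne
    push_neg at hne
    obtain ⟨i, hi⟩ := hne
    have : m.degree < e.degree := lt_of_lt_of_le hi (Finsupp.le_degree i e)
    rw [ordGE_prod_pow hg e m this, mul_zero]

lemma msubst_add (f₁ f₂ : MvPowerSeries (Fin k) R) (g : Fin k → MvPowerSeries (Fin l) R) :
    msubst (f₁ + f₂) g = msubst f₁ g + msubst f₂ g := by
  funext m
  show ∑ e ∈ _, _ = coeff m (msubst f₁ g + msubst f₂ g)
  rw [map_add]
  show _ = (∑ e ∈ _, _) + ∑ e ∈ _, _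
  rw [← Finset.sum_add_distrib]
  exact Finset.sum_congr rfl fun e _ => by rw [map_add, add_mul]

lemma msubst_sub (f₁ f₂ : MvPowerSeries (Fin k) R) (g : Fin k → MvPowerSeries (Fin l) R) :
    msubst (f₁ - f₂) g = msubst f₁ g - msubst f₂ g := by
  funext m
  show ∑ e ∈ _, _ = coeff m (msubst f₁ g - msubst f₂ g)
  rw [map_sub]
  show _ = (∑ e ∈ _, _) - ∑ e ∈ _, _
  rw [← Finset.sum_sub_distrib]
  exact Finset.sum_congr rfl fun e _ => by rw [map_sub, sub_mul]

/-- `coeff` of a polynomial evaluated (via `eval₂ C g`) in power series. -/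
lemma coeff_eval₂ (P : MvPolynomial (Fin k) R) (g : Fin k → MvPowerSeries (Fin l) R)
    (m : Fin l →₀ ℕ) :
    coeff m (MvPolynomial.eval₂ ((C : R →+* MvPowerSeries (Fin l) R)) g P)
      = ∑ e ∈ P.support, MvPolynomial.coeff e P * coeff m (∏ i, g i ^ e i) := by
  rw [MvPolynomial.eval₂_eq', map_sum]
  exact Finset.sum_congr rfl fun e _ => coeff_C_mul _ _ _

/-- If two polynomials agree on all exponents `≤ N` componentwise, their evaluations
agree in coefficients of degree `≤ N`. -/
lemma coeff_eval₂_congr {P Q : MvPolynomial (Fin k) R} {g : Fin k → MvPowerSeries (Fin l) R}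
    (hg : ∀ i, constantCoeff (g i) = 0) {N : ℕ} {m : Fin l →₀ ℕ} (hm : m.degree ≤ N)
    (h : ∀ e : Fin k →₀ ℕ, (∀ i, e i ≤ N) → MvPolynomial.coeff e P = MvPolynomial.coeff e Q) :
    coeff m (MvPolynomial.eval₂ ((C : R →+* MvPowerSeries (Fin l) R)) g P)
      = coeff m (MvPolynomial.eval₂ ((C : R →+* MvPowerSeries (Fin l) R)) g Q) := by
  classical
  rw [coeff_eval₂, coeff_eval₂]
  have hP : ∑ e ∈ P.support, MvPolynomial.coeff e P * coeff m (∏ i, g i ^ e i)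
      = ∑ e ∈ P.support ∪ Q.support, MvPolynomial.coeff e P * coeff m (∏ i, g i ^ e i) :=
    Finset.sum_subset Finset.subset_union_left
      (fun e _ he => by rw [MvPolynomial.notMem_support_iff.mp he, zero_mul])
  have hQ : ∑ e ∈ Q.support, MvPolynomial.coeff e Q * coeff m (∏ i, g i ^ e i)
      = ∑ e ∈ P.support ∪ Q.support, MvPolynomial.coeff e Q * coeff m (∏ i, g i ^ e i) :=
    Finset.sum_subset Finset.subset_union_right
      (fun e _ he => by rw [MvPolynomial.notMem_support_iff.mp he, zero_mul])
  rw [hP, hQ]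
  · apply Finset.sum_congr rfl
    intro e _
    by_cases he : ∀ i, e i ≤ N
    · rw [h e he]
    · push_neg at he
      obtain ⟨i, hi⟩ := he
      have : m.degree < e.degree := lt_of_le_of_lt hm (lt_of_lt_of_le hi (Finsupp.le_degree i e))
      rw [ordGE_prod_pow hg e m this, mul_zero, mul_zero]

/-- Truncation of a power series to exponents `≤ N` in each variable. -/
noncomputable def truncN (N : ℕ) (f : MvPowerSeries (Fin k) R) : MvPolynomial (Fin k) R :=
  ∑ e ∈ Finset.Iic (Finsupp.equivFunOnFinite.symm (fun _ : Fin k => N)),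
    MvPolynomial.monomial e (coeff e f)

lemma coeff_truncN (N : ℕ) (f : MvPowerSeries (Fin k) R) (e : Fin k →₀ ℕ) :
    MvPolynomial.coeff e (truncN N f) = if ∀ i, e i ≤ N then coeff e f else 0 := by
  classical
  rw [truncN, MvPolynomial.coeff_sum]
  by_cases he : ∀ i, e i ≤ N
  · rw [if_pos he, Finset.sum_eq_single e]
    · rw [MvPolynomial.coeff_monomial, if_pos rfl]
    · intro b _ hb; rw [MvPolynomial.coeff_monomial, if_neg hb]
    · intro habs; exact absurd (mem_Iic_const.mpr he) habs
  · rw [if_neg he]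
    apply Finset.sum_eq_zero
    intro b hb
    rw [MvPolynomial.coeff_monomial]
    rw [mem_Iic_const] at hb
    exact if_neg (fun hbe => he (by rw [← hbe]; exact hb))

/-- `msubst` agrees with evaluation of the truncation. -/
lemma coeff_msubst_eq_eval₂ (f : MvPowerSeries (Fin k) R)
    {g : Fin k → MvPowerSeries (Fin l) R} (hg : ∀ i, constantCoeff (g i) = 0)
    {m : Fin l →₀ ℕ} {N : ℕ} (hN : m.degree ≤ N) :
    coeff m (msubst f g) = coeff m (MvPolynomial.eval₂ ((C : R →+* MvPowerSeries (Fin l) R)) g (truncN N f)) := by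
  classical
  rw [coeff_msubst f hg m hN, coeff_eval₂]
  have hsub : (truncN N f).support
      ⊆ Finset.Iic (Finsupp.equivFunOnFinite.symm (fun _ : Fin k => N)) := by
    intro e he
    rw [MvPolynomial.mem_support_iff, coeff_truncN] at he
    rw [mem_Iic_const]
    by_contra hc
    exact he (if_neg hc)
  rw [Finset.sum_subset hsub]
  · apply Finset.sum_congr rfl
    intro e he
    rw [coeff_truncN, if_pos (mem_Iic_const.mp he)]
  · intro e _ hne
    rw [MvPolynomial.notMem_support_iff.mp hne, zero_mul]

end Dev2
section Dev3
variable {R : Type*} [CommRing R] {k l d : ℕ}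

lemma degree_le_of_le {u m : Fin l →₀ ℕ} (h : u ≤ m) : u.degree ≤ m.degree := by
  rw [degree_sum_univ, degree_sum_univ]
  exact Finset.sum_le_sum fun i _ => h i

lemma msubst_mul (f₁ f₂ : MvPowerSeries (Fin k) R) {g : Fin k → MvPowerSeries (Fin l) R}
    (hg : ∀ i, constantCoeff (g i) = 0) :
    msubst (f₁ * f₂) g = msubst f₁ g * msubst f₂ g := by
  funext m
  set N := m.degree with hNdef
  show coeff m (msubst (f₁ * f₂) g) = coeff m (msubst f₁ g * msubst f₂ g)
  rw [coeff_msubst_eq_eval₂ (f₁ * f₂) hg (N := N + N) (by omega)]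
  rw [coeff_eval₂_congr hg (le_refl N)
    (Q := truncN N f₁ * truncN N f₂) ?_]
  · rw [MvPolynomial.eval₂_mul, coeff_mul, coeff_mul]
    apply Finset.sum_congr rfl
    intro p hp
    rw [Finset.HasAntidiagonal.mem_antidiagonal] at hp
    have h1 : p.1.degree ≤ N := by
      rw [hNdef, ← hp, degree_add]; omega
    have h2 : p.2.degree ≤ N := by
      rw [hNdef, ← hp, degree_add]; omega
    rw [← coeff_msubst_eq_eval₂ f₁ hg h1, ← coeff_msubst_eq_eval₂ f₂ hg h2]
  · intro e he
    rw [coeff_truncN, if_pos (fun i => (he i).trans (Nat.le_add_right N N)),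
      MvPolynomial.coeff_mul, MvPowerSeries.coeff_mul]
    apply Finset.sum_congr rfl
    intro p hp
    rw [Finset.HasAntidiagonal.mem_antidiagonal] at hp
    have h1 : ∀ i, p.1 i ≤ N := fun i => le_trans (by
      have : p.1 i + p.2 i = e i := by rw [← hp]; rfl
      omega) (he i)
    have h2 : ∀ i, p.2 i ≤ N := fun i => le_trans (by
      have : p.1 i + p.2 i = e i := by rw [← hp]; rfl
      omega) (he i)
    rw [coeff_truncN, coeff_truncN, if_pos h1, if_pos h2]

lemma msubst_C (c : R) (g : Fin k → MvPowerSeries (Fin l) R) :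
    msubst (C c) g = C c := by
  classical
  funext m
  show ∑ e ∈ _, _ = coeff m (C c)
  rw [Finset.sum_eq_single (0 : Fin k →₀ ℕ)]
  · rw [coeff_zero_eq_constantCoeff, constantCoeff_C]
    simp only [Finsupp.coe_zero, Pi.zero_apply, pow_zero, Finset.prod_const_one]
    rw [coeff_C, MvPowerSeries.coeff_one]
    split <;> simp
  · intro e _ hne
    rw [coeff_C, if_neg hne, zero_mul]
  · intro habs
    exact absurd (Finset.mem_Iic.mpr bot_le) habs

lemma msubst_one (g : Fin k → MvPowerSeries (Fin l) R) : msubst 1 g = 1 := by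
  have := msubst_C (1 : R) g
  rwa [map_one] at this

lemma prod_pow_single {M : Type*} [CommMonoid M] (φ : Fin k → M) (i : Fin k) (n : ℕ) :
    ∏ j, φ j ^ (Finsupp.single i n) j = φ i ^ n := by
  classical
  rw [Finset.prod_eq_single i]
  · rw [Finsupp.single_eq_same]
  · intro j _ hj
    rw [Finsupp.single_apply, if_neg (Ne.symm hj).elim, pow_zero]
  · intro h; exact absurd (Finset.mem_univ i) h

lemma msubst_X (i : Fin k) {g : Fin k → MvPowerSeries (Fin l) R}
    (hg : ∀ i, constantCoeff (g i) = 0) : msubst (X i) g = g i := by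
  classical
  funext m
  show coeff m (msubst (X i) g) = coeff m (g i)
  rw [coeff_msubst (X i) hg m (Nat.le_succ_of_le (le_refl _))]
  rw [Finset.sum_eq_single (Finsupp.single i 1)]
  · rw [X, coeff_monomial, if_pos rfl, prod_pow_single, pow_one, one_mul]
  · intro e _ hne
    rw [X, coeff_monomial, if_neg hne, zero_mul]
  · intro habs
    exfalso; apply habs
    rw [mem_Iic_const]
    intro j
    rw [Finsupp.single_apply]
    split <;> omega

lemma msubst_pow (f : MvPowerSeries (Fin k) R) (n : ℕ)
    {g : Fin k → MvPowerSeries (Fin l) R} (hg : ∀ i, constantCoeff (g i) = 0) :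
    msubst (f ^ n) g = (msubst f g) ^ n := by
  induction n with
  | zero => simpa using msubst_one g
  | succ n ih => rw [pow_succ, pow_succ, msubst_mul _ _ hg, ih]

lemma msubst_prod_pow (u : Fin d → MvPowerSeries (Fin k) R) (e : Fin d →₀ ℕ)
    {g : Fin k → MvPowerSeries (Fin l) R} (hg : ∀ i, constantCoeff (g i) = 0) :
    msubst (∏ i, u i ^ e i) g = ∏ i, (msubst (u i) g) ^ e i := by
  classical
  have : ∀ s : Finset (Fin d),
      msubst (∏ i ∈ s, u i ^ e i) g = ∏ i ∈ s, (msubst (u i) g) ^ e i := by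
    intro s
    induction s using Finset.induction with
    | empty => simpa using msubst_one g
    | @insert a s ha ih =>
      rw [Finset.prod_insert ha, Finset.prod_insert ha, msubst_mul _ _ hg,
        msubst_pow _ _ hg, ih]
  exact this Finset.univ

lemma ordGE_msubst {t : ℕ} {f : MvPowerSeries (Fin k) R} (hf : OrdGE t f)
    {g : Fin k → MvPowerSeries (Fin l) R} (hg : ∀ i, constantCoeff (g i) = 0) :
    OrdGE t (msubst f g) := by
  intro m hm
  rw [coeff_msubst f hg m (le_refl _)]
  apply Finset.sum_eq_zero
  intro e _
  rcases le_or_gt e.degree m.degree with h | h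
  · rw [hf e (lt_of_le_of_lt h hm), zero_mul]
  · rw [ordGE_prod_pow hg e m h, mul_zero]

lemma constantCoeff_msubst (f : MvPowerSeries (Fin k) R)
    (g : Fin k → MvPowerSeries (Fin l) R) :
    constantCoeff (msubst f g) = constantCoeff f := by
  classical
  rw [← coeff_zero_eq_constantCoeff, ← coeff_zero_eq_constantCoeff]
  show ∑ e ∈ _, _ = _
  rw [Finset.sum_eq_single (0 : Fin k →₀ ℕ)]
  · simp only [Finsupp.coe_zero, Pi.zero_apply, pow_zero, Finset.prod_const_one]
    rw [coeff_zero_one, mul_one]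
  · intro e he hne
    exfalso
    apply hne
    rw [mem_Iic_const] at he
    ext i
    have h1 : e i ≤ (0 : Fin l →₀ ℕ).degree := he i
    rw [map_zero] at h1
    simp [Nat.le_zero.mp h1]
  · intro habs
    exact absurd (Finset.mem_Iic.mpr bot_le) habs

lemma msubst_assoc (f : MvPowerSeries (Fin k) R) (g : Fin k → MvPowerSeries (Fin d) R)
    (a : Fin d → MvPowerSeries (Fin l) R)
    (hg : ∀ i, constantCoeff (g i) = 0) (ha : ∀ j, constantCoeff (a j) = 0) :
    msubst (msubst f g) a = msubst f (fun i => msubst (g i) a) := by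
  classical
  funext m
  set N := m.degree with hNdef
  set M := d * N + N with hMdef
  have hga : ∀ i, constantCoeff (msubst (g i) a) = 0 := by
    intro i; rw [constantCoeff_msubst]; exact hg i
  have hsub : Finset.Iic (Finsupp.equivFunOnFinite.symm (fun _ : Fin k => N))
      ⊆ Finset.Iic (Finsupp.equivFunOnFinite.symm (fun _ : Fin k => M)) := by
    intro e he
    rw [mem_Iic_const] at he ⊢
    exact fun i => (he i).trans (Nat.le_add_left N (d * N))
  show coeff m (msubst (msubst f g) a) = coeff m (msubst f (fun i => msubst (g i) a))
  have hRHS : coeff m (msubst f (fun i => msubst (g i) a))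
      = ∑ e ∈ Finset.Iic (Finsupp.equivFunOnFinite.symm (fun _ : Fin k => M)),
        coeff e f * coeff m (msubst (∏ i, g i ^ e i) a) := by
    rw [coeff_msubst f hga m (le_refl N)]
    have step1 : ∑ e ∈ Finset.Iic (Finsupp.equivFunOnFinite.symm (fun _ : Fin k => N)),
        coeff e f * coeff m (∏ i, (msubst (g i) a) ^ e i)
        = ∑ e ∈ Finset.Iic (Finsupp.equivFunOnFinite.symm (fun _ : Fin k => N)),
        coeff e f * coeff m (msubst (∏ i, g i ^ e i) a) :=
      Finset.sum_congr rfl fun e _ => by rw [msubst_prod_pow g e ha]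
    rw [step1]
    apply Finset.sum_subset hsub
    intro e _ hne
    rw [mem_Iic_const] at hne
    push_neg at hne
    obtain ⟨i, hi⟩ := hne
    have hdeg : m.degree < e.degree := lt_of_lt_of_le hi (Finsupp.le_degree i e)
    rw [ordGE_msubst (ordGE_prod_pow hg e) ha m hdeg, mul_zero]
  rw [hRHS]
  rw [coeff_msubst (msubst f g) ha m (le_refl N)]
  have hLHS : ∀ dd ∈ Finset.Iic (Finsupp.equivFunOnFinite.symm (fun _ : Fin d => N)),
      coeff dd (msubst f g)
        = ∑ e ∈ Finset.Iic (Finsupp.equivFunOnFinite.symm (fun _ : Fin k => M)),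
          coeff e f * coeff dd (∏ i, g i ^ e i) := by
    intro dd hdd
    rw [mem_Iic_const] at hdd
    apply coeff_msubst f hg dd
    calc dd.degree = ∑ i, dd i := degree_sum_univ dd
    _ ≤ ∑ _i : Fin d, N := Finset.sum_le_sum fun i _ => hdd i
    _ = d * N := by simp [Finset.sum_const, Finset.card_univ, mul_comm]
    _ ≤ M := Nat.le_add_right _ _
  rw [Finset.sum_congr rfl (fun dd hdd => by rw [hLHS dd hdd, Finset.sum_mul])]
  rw [Finset.sum_comm]
  apply Finset.sum_congr rfl
  intro e _
  rw [coeff_msubst (∏ i, g i ^ e i) ha m (le_refl N), Finset.mul_sum]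
  exact Finset.sum_congr rfl fun dd _ => by ring

end Dev3
section Dev4
variable {R : Type*} [CommRing R] {k l : ℕ}

lemma degree_single (i : Fin l) (n : ℕ) : (Finsupp.single i n).degree = n := by
  rw [degree_sum_univ]
  rw [Finset.sum_eq_single i]
  · rw [Finsupp.single_eq_same]
  · intro j _ hj; rw [Finsupp.single_eq_of_ne hj]
  · intro hh; exact absurd (Finset.mem_univ i) hh

lemma degree_eq_one_iff {e : Fin l →₀ ℕ} :
    e.degree = 1 ↔ ∃ j, e = Finsupp.single j 1 := by
  classical
  constructor
  · intro h1
    have hne : e ≠ 0 := fun h0 => by simp [h0, map_zero] at h1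
    obtain ⟨j, hj⟩ : ∃ j, e j ≠ 0 := by
      by_contra hc
      push_neg at hc
      exact hne (Finsupp.ext fun i => hc i)
    have hle : e j ≤ 1 := h1 ▸ Finsupp.le_degree j e
    have hej : e j = 1 := by omega
    refine ⟨j, Finsupp.ext fun i => ?_⟩
    rcases eq_or_ne i j with rfl | hij
    · rw [hej, Finsupp.single_eq_same]
    · rw [Finsupp.single_eq_of_ne hij]
      have hsum : ∑ i', e i' = 1 := by rw [← degree_sum_univ, h1]
      rw [← Finset.add_sum_erase _ _ (Finset.mem_univ j), hej] at hsum
      have hz : ∑ i' ∈ Finset.univ.erase j, e i' = 0 := by omega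
      exact (Finset.sum_eq_zero_iff.mp hz) i (Finset.mem_erase.mpr ⟨hij, Finset.mem_univ i⟩)
  · rintro ⟨j, rfl⟩
    exact degree_single j 1

/-- Chain rule for linear coefficients. -/
lemma coeff_single_one_msubst (f : MvPowerSeries (Fin k) R)
    {g : Fin k → MvPowerSeries (Fin l) R} (hg : ∀ i, constantCoeff (g i) = 0)
    (i : Fin l) :
    coeff (Finsupp.single i 1) (msubst f g)
      = ∑ j, coeff (Finsupp.single j 1) f * coeff (Finsupp.single i 1) (g j) := by
  classical
  rw [coeff_msubst f hg _ (le_of_eq (degree_single i 1))]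
  rw [← Finset.sum_filter_add_sum_filter_not _ (fun e => e.degree = 1)]
  have h2 : ∑ e ∈ Finset.filter (fun e => ¬ e.degree = 1)
      (Finset.Iic (Finsupp.equivFunOnFinite.symm (fun _ : Fin k => 1))),
      coeff e f * coeff (Finsupp.single i 1) (∏ j, g j ^ e j) = 0 := by
    apply Finset.sum_eq_zero
    intro e he
    rw [Finset.mem_filter] at he
    rcases Nat.lt_or_ge e.degree 1 with hlt | hge
    · have he0 : e = 0 := (Finsupp.degree_eq_zero_iff e).mp (by omega)
      subst he0
      simp only [Finsupp.coe_zero, Pi.zero_apply, pow_zero, Finset.prod_const_one]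
      rw [MvPowerSeries.coeff_one, if_neg (by
        intro hh
        have := degree_single i 1
        rw [hh, map_zero] at this
        omega), mul_zero]
    · have hgt : 1 < e.degree := by
        rcases Nat.lt_or_ge 1 e.degree with h | h
        · exact h
        · exact absurd (le_antisymm h hge) he.2
      rw [ordGE_prod_pow hg e _ (by rw [degree_single]; exact hgt), mul_zero]
  rw [h2, add_zero]
  have hset : Finset.filter (fun e => e.degree = 1)
      (Finset.Iic (Finsupp.equivFunOnFinite.symm (fun _ : Fin k => 1)))
      = Finset.univ.image (fun j : Fin k => Finsupp.single j 1) := by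
    ext e
    rw [Finset.mem_filter, Finset.mem_image]
    constructor
    · rintro ⟨_, h1⟩
      obtain ⟨j, rfl⟩ := degree_eq_one_iff.mp h1
      exact ⟨j, Finset.mem_univ j, rfl⟩
    · rintro ⟨j, _, rfl⟩
      refine ⟨mem_Iic_const.mpr fun i' => ?_, degree_single j 1⟩
      rw [Finsupp.single_apply]
      split <;> omega
  rw [hset, Finset.sum_image (fun a _ b _ hab =>
    (Finsupp.single_left_inj one_ne_zero).mp hab)]
  apply Finset.sum_congr rfl
  intro j _
  rw [prod_pow_single, pow_one]

lemma ordGE_pow_sub_pow {t r j : ℕ} {φ ψ : MvPowerSeries (Fin l) R}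
    (hφ : OrdGE t φ) (hψ : OrdGE t ψ) (hd : OrdGE (t + r) (φ - ψ)) :
    OrdGE (j * t + r) (φ ^ j - ψ ^ j) := by
  classical
  have := ordGE_prod_sub_prod (Finset.range j) (fun _ => t) r (fun _ => φ) (fun _ => ψ)
    (fun _ _ => hφ) (fun _ _ => hψ) (fun _ _ => hd)
  simpa [Finset.prod_const, Finset.sum_const, Finset.card_range, mul_comm] using this

lemma prod_C_mul_X_pow (c : R) (e : Fin l →₀ ℕ) :
    ∏ i, (C c * X i) ^ e i = C (c ^ e.degree) * monomial e 1 := by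
  classical
  have h1 : ∏ i, (C c * X i) ^ e i
      = (∏ i, (C c) ^ e i) * ∏ i, (X i : MvPowerSeries (Fin l) R) ^ e i := by
    rw [← Finset.prod_mul_distrib]
    exact Finset.prod_congr rfl fun i _ => mul_pow _ _ _
  rw [h1]
  have h2 : ∏ i, (C c : MvPowerSeries (Fin l) R) ^ e i = C (c ^ e.degree) := by
    rw [Finset.prod_pow_eq_pow_sum, ← degree_sum_univ, map_pow]
  have h3 : ∏ i, (X i : MvPowerSeries (Fin l) R) ^ e i = monomial e 1 := by
    simp only [X_pow_eq]
    rw [show (monomial e (1:R)) = monomial (∑ i, Finsupp.single i (e i)) 1 by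
      rw [Finsupp.univ_sum_single e]]
    induction (Finset.univ : Finset (Fin l)) using Finset.induction with
    | empty => simp
    | @insert _ _ h ih => rw [Finset.prod_insert h, Finset.sum_insert h, ih,
        monomial_mul_monomial, one_mul]
  rw [h2, h3]

lemma coeff_prod_near_linear {c : R} {u : Fin l → MvPowerSeries (Fin l) R}
    (hu0 : ∀ i, constantCoeff (u i) = 0)
    (hulin : ∀ i, OrdGE 2 (u i - C c * X i))
    (m e : Fin l →₀ ℕ) (hde : e.degree = m.degree) :
    coeff m (∏ i, u i ^ e i) = c ^ m.degree * (if m = e then 1 else 0) := by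
  classical
  have hCX : ∀ i, OrdGE 1 (C c * X i : MvPowerSeries (Fin l) R) := by
    intro i
    apply ordGE_of_constantCoeff_zero
    rw [map_mul, constantCoeff_X, mul_zero]
  have hu1 : ∀ i, OrdGE 1 (u i) := fun i => ordGE_of_constantCoeff_zero (hu0 i)
  have hpows : ∀ i, OrdGE (e i + 1) (u i ^ e i - (C c * X i) ^ e i) := by
    intro i
    have := ordGE_pow_sub_pow (t := 1) (r := 1) (j := e i) (hu1 i) (hCX i) (hulin i)
    simpa using this
  have hprod : OrdGE (e.degree + 1) (∏ i, u i ^ e i - ∏ i, (C c * X i) ^ e i) := by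
    have := ordGE_prod_sub_prod Finset.univ (fun i => e i) 1 (fun i => u i ^ e i)
      (fun i => (C c * X i : MvPowerSeries (Fin l) R) ^ e i)
      (fun i _ => by simpa using (hu1 i).pow (e i))
      (fun i _ => by simpa using (hCX i).pow (e i))
      (fun i _ => hpows i)
    rwa [← degree_sum_univ] at this
  have heq : coeff m (∏ i, u i ^ e i) = coeff m (∏ i, (C c * X i) ^ e i) := by
    have h0 := hprod m (by omega)
    rw [map_sub, sub_eq_zero] at h0
    exact h0
  rw [heq, prod_C_mul_X_pow, coeff_C_mul, coeff_monomial, hde]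

/-- Key lemma A : substituting near-linear series into a series of order `≥ n`. -/
lemma keyA {n : ℕ} {Δ : MvPowerSeries (Fin l) R} (hΔ : OrdGE n Δ) (c : R)
    {u : Fin l → MvPowerSeries (Fin l) R} (hu0 : ∀ i, constantCoeff (u i) = 0)
    (hulin : ∀ i, OrdGE 2 (u i - C c * X i))
    (m : Fin l →₀ ℕ) (hm : m.degree = n) :
    coeff m (msubst Δ u) = c ^ n * coeff m Δ := by
  classical
  rw [coeff_msubst Δ hu0 m (le_of_eq hm)]
  rw [Finset.sum_eq_single m]
  · rw [coeff_prod_near_linear hu0 hulin m m rfl, if_pos rfl, hm, mul_one]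
    ring
  · intro e _ hne
    rcases lt_trichotomy e.degree n with hlt | heq | hgt
    · rw [hΔ e hlt, zero_mul]
    · rw [coeff_prod_near_linear hu0 hulin m e (by omega), if_neg (fun hh => hne hh.symm),
        mul_zero, mul_zero]
    · rw [ordGE_prod_pow hu0 e m (by omega), mul_zero]
  · intro habs
    exfalso; apply habs
    rw [mem_Iic_const]
    intro i
    exact hm ▸ Finsupp.le_degree i m

/-- Key lemma B : difference of substitutions into a one-variable series. -/
lemma keyB {n : ℕ} (g : MvPowerSeries (Fin 1) R) {Φ₁ Φ₂ : MvPowerSeries (Fin l) R}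
    (h1 : constantCoeff Φ₁ = 0) (h2 : constantCoeff Φ₂ = 0)
    (hn : 1 ≤ n) (hdiff : OrdGE n (Φ₁ - Φ₂)) (m : Fin l →₀ ℕ) (hm : m.degree = n) :
    coeff m (msubst g ![Φ₁]) - coeff m (msubst g ![Φ₂])
      = coeff (Finsupp.single 0 1) g * coeff m (Φ₁ - Φ₂) := by
  classical
  have hv1 : ∀ j : Fin 1, constantCoeff ((![Φ₁] : Fin 1 → _) j) = 0 := by
    intro j; fin_cases j; exact h1
  have hv2 : ∀ j : Fin 1, constantCoeff ((![Φ₂] : Fin 1 → _) j) = 0 := by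
    intro j; fin_cases j; exact h2
  rw [coeff_msubst g hv1 m (le_of_eq hm), coeff_msubst g hv2 m (le_of_eq hm),
    ← Finset.sum_sub_distrib]
  have hterm : ∀ e : Fin 1 →₀ ℕ,
      coeff e g * coeff m (∏ i, (![Φ₁] : Fin 1 → _) i ^ e i)
        - coeff e g * coeff m (∏ i, (![Φ₂] : Fin 1 → _) i ^ e i)
      = coeff e g * coeff m (Φ₁ ^ e 0 - Φ₂ ^ e 0) := by
    intro e
    rw [Fin.prod_univ_one, Fin.prod_univ_one, map_sub]
    simp only [Matrix.cons_val_zero]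
    ring
  rw [Finset.sum_congr rfl (fun e _ => hterm e)]
  rw [Finset.sum_eq_single (Finsupp.single (0 : Fin 1) 1)]
  · rw [Finsupp.single_eq_same, pow_one, pow_one]
  · intro e _ hne
    rcases Nat.lt_or_ge (e 0) 1 with hlt | hge
    · have he0 : e 0 = 0 := by omega
      have he' : e = 0 := Finsupp.ext fun i => by
        have hi : i = (0 : Fin 1) := Subsingleton.elim i 0
        rw [hi]; exact he0
      rw [he']
      simp
    · rcases Nat.lt_or_ge (e 0) 2 with hlt2 | hge2
      · exfalso
        apply hne
        apply Finsupp.ext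
        intro i
        have hi : i = (0 : Fin 1) := Subsingleton.elim i 0
        rw [hi, Finsupp.single_eq_same]
        omega
      · have hord : OrdGE (e 0 * 1 + (n - 1)) (Φ₁ ^ e 0 - Φ₂ ^ e 0) :=
          ordGE_pow_sub_pow (ordGE_of_constantCoeff_zero h1) (ordGE_of_constantCoeff_zero h2)
            (by
              have : 1 + (n - 1) = n := by omega
              rw [this]; exact hdiff)
        rw [hord m (by omega), mul_zero]
  · intro habs
    exfalso; apply habs
    rw [mem_Iic_const]
    intro j
    have hj : j = (0 : Fin 1) := Subsingleton.elim j 0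
    rw [hj, Finsupp.single_eq_same]
    exact hn

end Dev4
section Dev5
variable {R : Type*} [CommRing R] {k l : ℕ}

lemma vec1_const {φ : MvPowerSeries (Fin l) R} (hφ : constantCoeff φ = 0) :
    ∀ j : Fin 1, constantCoeff ((![φ] : Fin 1 → _) j) = 0 := by
  intro j; fin_cases j; exact hφ

lemma vec2_const {φ ψ : MvPowerSeries (Fin l) R} (hφ : constantCoeff φ = 0)
    (hψ : constantCoeff ψ = 0) :
    ∀ j : Fin 2, constantCoeff ((![φ, ψ] : Fin 2 → _) j) = 0 := by
  intro j; fin_cases j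
  · exact hφ
  · exact hψ

/-- One-variable-in-the-middle associativity. -/
lemma msubst_assoc1 {d : ℕ} (u : MvPowerSeries (Fin 1) R) (w : MvPowerSeries (Fin d) R)
    (a : Fin d → MvPowerSeries (Fin l) R) (hw : constantCoeff w = 0)
    (ha : ∀ j, constantCoeff (a j) = 0) :
    msubst (msubst u ![w]) a = msubst u ![msubst w a] := by
  rw [msubst_assoc u ![w] a (vec1_const hw) ha]
  congr 1
  exact funext fun i => by fin_cases i; rfl

lemma coeff_single_one_msubst1 (u : MvPowerSeries (Fin 1) R)
    {w : MvPowerSeries (Fin l) R} (hw : constantCoeff w = 0) (i : Fin l) :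
    coeff (Finsupp.single i 1) (msubst u ![w])
      = coeff (Finsupp.single (0 : Fin 1) 1) u * coeff (Finsupp.single i 1) w := by
  rw [coeff_single_one_msubst u (vec1_const hw) i, Fin.sum_univ_one]
  simp only [Matrix.cons_val_zero]

lemma coeff_single_one_X (i j : Fin l) :
    coeff (Finsupp.single i 1) (X j : MvPowerSeries (Fin l) R)
      = if i = j then 1 else 0 := by
  classical
  rw [X, coeff_monomial]
  rcases eq_or_ne i j with rfl | hij
  · rw [if_pos rfl, if_pos rfl]
  · rw [if_neg (fun hh => hij ((Finsupp.single_left_inj (one_ne_zero (α := ℕ))).mp hh)),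
      if_neg hij]

end Dev5
section Main
variable {R : Type*} [CommRing R] [IsDomain R]

theorem main_aux (F G : MvPowerSeries (Fin 2) R) (hF : IsFGL F) (hG : IsFGL G)
    (f g : PS R) (hfE : IsEndoFGL F f) (hgE : IsEndoFGL G g) (hgS : Stable g)
    (h : PS R) (h0 : constantCoeff h = 0)
    (hd : d0 h ≠ 0) (hsemi : comp h f = comp g h) :
    IsHomFGL F G h := by
  classical
  obtain ⟨hf0, hfEq⟩ := hfE
  obtain ⟨hg0, hgEq⟩ := hgE
  have hsemi' : msubst h ![f] = msubst g ![h] := hsemi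
  -- constant coefficients of F and G
  have hF0 : constantCoeff F = 0 := by
    have := hF.left 0
    rw [Finsupp.single_zero, coeff_zero_eq_constantCoeff] at this
    simpa using this
  have hG0 : constantCoeff G = 0 := by
    have := hG.left 0
    rw [Finsupp.single_zero, coeff_zero_eq_constantCoeff] at this
    simpa using this
  have hXc : ∀ j : Fin 2, constantCoeff (X j : MvPowerSeries (Fin 2) R) = 0 :=
    fun j => constantCoeff_X j
  -- d0 f = d0 g
  have hfg : d0 f = d0 g := by
    have e1 := congrArg (coeff (Finsupp.single (0 : Fin 1) 1)) hsemi'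
    rw [coeff_single_one_msubst1 h hf0, coeff_single_one_msubst1 g h0] at e1
    have e2 : d0 h * d0 f = d0 h * d0 g := by
      rw [d0, d0, d0]
      rw [e1]; ring
    exact mul_left_cancel₀ hd e2
  set c := d0 g with hc
  -- the two sides
  set Φ₁ := msubst h ![F] with hΦ₁def
  set Φ₂ := msubst G ![msubst h ![(X 0 : MvPowerSeries (Fin 2) R)],
      msubst h ![(X 1 : MvPowerSeries (Fin 2) R)]] with hΦ₂def
  set fs : Fin 2 → MvPowerSeries (Fin 2) R := fun i => msubst f ![X i] with hfsdef
  have hfs : ∀ i, constantCoeff (fs i) = 0 := fun i => by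
    rw [hfsdef, constantCoeff_msubst]; exact hf0
  have hhs : ∀ j : Fin 2, constantCoeff
      ((![msubst h ![(X 0 : MvPowerSeries (Fin 2) R)],
        msubst h ![(X 1 : MvPowerSeries (Fin 2) R)]] : Fin 2 → _) j) = 0 :=
    vec2_const (by rw [constantCoeff_msubst]; exact h0) (by rw [constantCoeff_msubst]; exact h0)
  have hΦ₁0 : constantCoeff Φ₁ = 0 := by rw [hΦ₁def, constantCoeff_msubst]; exact h0
  have hΦ₂0 : constantCoeff Φ₂ = 0 := by rw [hΦ₂def, constantCoeff_msubst]; exact hG0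
  -- semiconjugacy transporter
  have hsemi2 : ∀ w : MvPowerSeries (Fin 2) R, constantCoeff w = 0 →
      msubst h ![msubst f ![w]] = msubst g ![msubst h ![w]] := by
    intro w hw
    rw [← msubst_assoc1 h f ![w] hf0 (vec1_const hw),
      ← msubst_assoc1 g h ![w] h0 (vec1_const hw), hsemi']
  -- the vector ![msubst f ![X 0], msubst f ![X 1]] is fs
  have hfsvec : (![msubst f ![(X 0 : MvPowerSeries (Fin 2) R)],
      msubst f ![(X 1 : MvPowerSeries (Fin 2) R)]] : Fin 2 → _) = fs := by
    funext i; fin_cases i <;> rfl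
  -- E1
  have E1 : msubst Φ₁ fs = msubst g ![Φ₁] := by
    rw [hΦ₁def, msubst_assoc1 h F fs hF0 hfs]
    have hFfs : msubst F fs = msubst f ![F] := by rw [hfEq, hfsvec]
    rw [hFfs, hsemi2 F hF0]
  -- E2
  have E2 : msubst Φ₂ fs = msubst g ![Φ₂] := by
    have hgs : ∀ j : Fin 2, constantCoeff
        ((![msubst g ![(X 0 : MvPowerSeries (Fin 2) R)],
          msubst g ![(X 1 : MvPowerSeries (Fin 2) R)]] : Fin 2 → _) j) = 0 :=
      vec2_const (by rw [constantCoeff_msubst]; exact hg0)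
        (by rw [constantCoeff_msubst]; exact hg0)
    rw [hΦ₂def, msubst_assoc G _ fs hhs hfs]
    have hclaim1 : ∀ j : Fin 2,
        msubst ((![msubst h ![(X 0 : MvPowerSeries (Fin 2) R)],
          msubst h ![(X 1 : MvPowerSeries (Fin 2) R)]] : Fin 2 → _) j) fs
        = msubst g ![msubst h ![(X j : MvPowerSeries (Fin 2) R)]] := by
      intro j
      fin_cases j <;>
      · show msubst (msubst h ![X _]) fs = _
        rw [msubst_assoc1 h (X _) fs (hXc _) hfs, msubst_X _ hfs]
        show msubst h ![msubst f ![X _]] = _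
        rw [hsemi2 (X _) (hXc _)]
        rfl
    have hRHS : msubst g ![Φ₂] = msubst G (fun j =>
        msubst g ![msubst h ![(X j : MvPowerSeries (Fin 2) R)]]) := by
      rw [hΦ₂def, ← msubst_assoc1 g G _ hG0 hhs, hgEq, msubst_assoc G _ _ hgs hhs]
      apply congrArg
      funext j
      fin_cases j <;>
      · show msubst (msubst g ![X _]) _ = _
        rw [msubst_assoc1 g (X _) _ (hXc _) hhs, msubst_X _ hhs]
        rfl
    rw [hRHS]
    apply congrArg
    funext j
    exact hclaim1 j
  -- linear coefficients agree
  have hFlin : ∀ i : Fin 2, coeff (Finsupp.single i 1) F = 1 := by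
    intro i
    fin_cases i
    · simpa using hF.left 1
    · simpa using hF.right 1
  have hGlin : ∀ i : Fin 2, coeff (Finsupp.single i 1) G = 1 := by
    intro i
    fin_cases i
    · simpa using hG.left 1
    · simpa using hG.right 1
  have hlin1 : ∀ i : Fin 2, coeff (Finsupp.single i 1) Φ₁ = d0 h := by
    intro i
    rw [hΦ₁def, coeff_single_one_msubst1 h hF0 i, hFlin i, mul_one]
    rfl
  have hhsj : ∀ (i j : Fin 2), coeff (Finsupp.single i 1)
      ((![msubst h ![(X 0 : MvPowerSeries (Fin 2) R)],
        msubst h ![(X 1 : MvPowerSeries (Fin 2) R)]] : Fin 2 → _) j)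
      = d0 h * (if i = j then 1 else 0) := by
    intro i j
    fin_cases j <;>
    · show coeff (Finsupp.single i 1) (msubst h ![X _]) = _
      rw [coeff_single_one_msubst1 h (hXc _) i, coeff_single_one_X]
      rfl
  have hlin2 : ∀ i : Fin 2, coeff (Finsupp.single i 1) Φ₂ = d0 h := by
    intro i
    rw [hΦ₂def, coeff_single_one_msubst G hhs i, Fin.sum_univ_two]
    have t0 := hhsj i 0
    have t1 := hhsj i 1
    rw [t0, t1, hGlin 0, hGlin 1]
    fin_cases i <;> simp
  -- stability ingredients
  have hc0 : c ≠ 0 := hgS.2.1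
  have hfslin : ∀ i : Fin 2, OrdGE 2 (fs i - C c * X i) := by
    intro i m hm
    rw [map_sub]
    rcases Nat.lt_or_ge m.degree 1 with hlt | hge
    · have hm0 : m = 0 := (Finsupp.degree_eq_zero_iff m).mp (by omega)
      subst hm0
      rw [coeff_zero_eq_constantCoeff, hfs i, map_mul, constantCoeff_X, mul_zero, sub_zero]
    · have hm1 : m.degree = 1 := by omega
      obtain ⟨j, rfl⟩ := degree_eq_one_iff.mp hm1
      rw [hfsdef]
      show coeff _ (msubst f ![X i]) - _ = 0
      rw [coeff_single_one_msubst1 f (hXc i) j, coeff_C_mul]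
      rw [show coeff (Finsupp.single (0 : Fin 1) 1) f = c from hfg]
      ring
  -- the main induction
  have main : ∀ n : ℕ, ∀ m : Fin 2 →₀ ℕ, m.degree = n → coeff m Φ₁ = coeff m Φ₂ := by
    intro n
    induction n using Nat.strong_induction_on with
    | _ n IH =>
      match n, IH with
      | 0, _ =>
        intro m hm
        have hm0 : m = 0 := (Finsupp.degree_eq_zero_iff m).mp hm
        subst hm0
        rw [coeff_zero_eq_constantCoeff, hΦ₁0, hΦ₂0]
      | 1, _ =>
        intro m hm
        obtain ⟨i, rfl⟩ := degree_eq_one_iff.mp hm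
        rw [hlin1 i, hlin2 i]
      | (n + 2), IH =>
        intro m hm
        have hΔ : OrdGE (n + 2) (Φ₁ - Φ₂) := by
          intro m' hm'
          rw [map_sub, IH m'.degree hm' m' rfl, sub_self]
        have hA : coeff m (msubst (Φ₁ - Φ₂) fs) = c ^ (n + 2) * coeff m (Φ₁ - Φ₂) :=
          keyA hΔ c hfs hfslin m hm
        have hB : coeff m (msubst g ![Φ₁]) - coeff m (msubst g ![Φ₂])
            = coeff (Finsupp.single 0 1) g * coeff m (Φ₁ - Φ₂) :=
          keyB g hΦ₁0 hΦ₂0 (by omega) hΔ m hm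
        have hEq : coeff m (msubst (Φ₁ - Φ₂) fs)
            = coeff m (msubst g ![Φ₁]) - coeff m (msubst g ![Φ₂]) := by
          rw [msubst_sub, map_sub, E1, E2]
        have hmul : (c ^ (n + 2) - c) * coeff m (Φ₁ - Φ₂) = 0 := by
          have : c ^ (n + 2) * coeff m (Φ₁ - Φ₂) = c * coeff m (Φ₁ - Φ₂) := by
            rw [← hA, hEq, hB]; rfl
          rw [sub_mul, this]; ring
        have hfac : c ^ (n + 2) - c ≠ 0 := by
          intro hh
          have hh2 : c * (c ^ (n + 1) - 1) = 0 := by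
            rw [← hh]; ring
          rcases mul_eq_zero.mp hh2 with h' | h'
          · exact hc0 h'
          · exact hgS.2.2 (n + 1) (by omega) (by rwa [sub_eq_zero] at h')
        have hzero : coeff m (Φ₁ - Φ₂) = 0 := by
          rcases mul_eq_zero.mp hmul with h' | h'
          · exact absurd h' hfac
          · exact h'
        rw [map_sub, sub_eq_zero] at hzero
        exact hzero
  refine ⟨h0, ?_⟩
  apply MvPowerSeries.ext
  intro m
  exact main m.degree m rfl

end Main

variable (p : ℕ) [Fact p.Prime] (K : Type*) [Field K] [Algebra ℚ_[p] K]
  [Algebra ℤ_[p] K] [IsScalarTower ℤ_[p] ℚ_[p] K] [FiniteDimensional ℚ_[p] K]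

/-- Semiconjugacy lemma: if `f`, `g` are endomorphisms of the formal group laws `F`,
`G` respectively, `g` is stable, and `h ∈ X·O_K⟦X⟧` has `h'(0) ≠ 0` and satisfies
`h ∘ f = g ∘ h`, then `h` is a homomorphism from `F` to `G`. -/
theorem stmt5 (F G : MvPowerSeries (Fin 2) (integralClosure ℤ_[p] K))
    (hF : IsFGL F) (hG : IsFGL G)
    (f g : PS (integralClosure ℤ_[p] K))
    (hfE : IsEndoFGL F f) (hgE : IsEndoFGL G g) (hgS : Stable g)
    (h : PS (integralClosure ℤ_[p] K)) (h0 : constantCoeff h = 0)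
    (hd : d0 h ≠ 0) (hsemi : comp h f = comp g h) :
    IsHomFGL F G h :=
  main_aux F G hF hG f g hfE hgE hgS h h0 hd hsemi
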